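/- The quotient of the graph C_{T_n(F)} by the equivalence relation 'equal diagonals' (with induced adjacency) is isomorphic to the antipodal Hamming graph A(H(n, |F|)): the graph on F^n where two vectors are adjacent iff they differ in every coordinate. -/

import Mathlib

open Matrix

/-- The subring of upper triangular `n × n` matrices over `F`. -/
def upperTri (F : Type) [Field F] (n : ℕ) : Subring (Matrix (Fin n) (Fin n) F) where
  carrier := {M | M.BlockTriangular id}
  zero_mem' := Matrix.blockTriangular_zero
  one_mem' := Matrix.blockTriangular_one
  add_mem' := fun ha hb => ha.add hb
  mul_mem' := fun ha hb => ha.mul hb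
  neg_mem' := fun ha => ha.neg

/-- The unitary Cayley graph of the ring `T_n(F)`. -/
def cayley (F : Type) [Field F] (n : ℕ) : SimpleGraph (upperTri F n) where
  Adj x y := x ≠ y ∧ IsUnit (x - y)
  symm := by
    constructor
    intro x y ⟨hne, hu⟩
    exact ⟨hne.symm, by simpa using hu.neg⟩
  loopless := ⟨fun x h => h.1 rfl⟩

/-- The equivalence relation "equal diagonals" on `T_n(F)`. -/
def diagSetoid (F : Type) [Field F] (n : ℕ) : Setoid (upperTri F n) where
  r a b := ∀ i : Fin n, (a : Matrix (Fin n) (Fin n) F) i i = (b : Matrix (Fin n) (Fin n) F) i i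
  iseqv := ⟨fun _ _ => rfl, fun h i => (h i).symm, fun h1 h2 i => (h1 i).trans (h2 i)⟩

/-- The quotient of `C_{T_n(F)}` by the relation "equal diagonals": two classes are
adjacent iff some representatives are adjacent. -/
def diagQuot (F : Type) [Field F] (n : ℕ) [NeZero n] :
    SimpleGraph (Quotient (diagSetoid F n)) where
  Adj X Y := ∃ a b : upperTri F n,
    Quotient.mk (diagSetoid F n) a = X ∧ Quotient.mk (diagSetoid F n) b = Y ∧
      (cayley F n).Adj a b
  symm := ⟨fun _ _ ⟨a, b, ha, hb, h⟩ => ⟨b, a, hb, ha, h.symm⟩⟩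
  loopless := by
    constructor
    rintro X ⟨a, b, ha, hb, hne, hu⟩
    have heq : ∀ i : Fin n,
        (a : Matrix (Fin n) (Fin n) F) i i = (b : Matrix (Fin n) (Fin n) F) i i :=
      Quotient.exact (ha.trans hb.symm)
    have hu' : IsUnit ((a - b : upperTri F n) : Matrix (Fin n) (Fin n) F) :=
      hu.map (upperTri F n).subtype
    rw [Matrix.isUnit_iff_isUnit_det, Matrix.det_of_upperTriangular (a - b).2] at hu'
    have i0 : Fin n := ⟨0, Nat.pos_of_ne_zero (NeZero.ne n)⟩
    have hz : (∏ i : Fin n, ((a - b : upperTri F n) : Matrix (Fin n) (Fin n) F) i i) = 0 :=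
      Finset.prod_eq_zero (Finset.mem_univ i0) (by
        have h := heq i0
        push_cast [Matrix.sub_apply]
        rw [h, sub_self])
    rw [hz] at hu'
    exact hu'.ne_zero rfl

/-- The antipodal graph of the Hamming graph `H(n, |S|)`. -/
def antipodalHamming (S : Type) (n : ℕ) : SimpleGraph (Fin n → S) where
  Adj u v := u ≠ v ∧ ∀ i, u i ≠ v i
  symm := ⟨fun _ _ ⟨h1, h2⟩ => ⟨h1.symm, fun i => (h2 i).symm⟩⟩
  loopless := ⟨fun _ h => h.1 rfl⟩

/-!
An upper triangular matrix over a field is a unit iff its diagonal entries are nonzero: its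
determinant is the product of the diagonal, and the inverse of an invertible upper triangular
matrix is again upper triangular. Hence `x ~ y` in `C_{T_n(F)}` iff the diagonals of `x` and `y`
differ in every coordinate, and taking diagonals identifies the quotient with `F^n`, diagonal
matrices giving the inverse.
-/

namespace upperTri

variable {F : Type} [Field F] {n : ℕ}

theorem isUnit_iff (a : upperTri F n) : IsUnit a ↔ ∀ i, a.1 i i ≠ 0 := by
  have hdet : IsUnit a.1 ↔ ∀ i, a.1 i i ≠ 0 := by
    rw [isUnit_iff_isUnit_det, det_of_isUpperTriangular a.2, isUnit_iff_ne_zero,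
      Finset.prod_ne_zero_iff]
    simp only [Finset.mem_univ, true_implies]
  refine ⟨fun ha => hdet.1 (ha.map (upperTri F n).subtype), fun h => ?_⟩
  have : Invertible a.1 := (hdet.2 h).invertible
  let b : upperTri F n := ⟨a.1⁻¹, blockTriangular_inv_of_blockTriangular a.2⟩
  exact isUnit_iff_exists.2 ⟨b, Subtype.ext (mul_inv_of_invertible a.1),
    Subtype.ext (inv_mul_of_invertible a.1)⟩

def diagonal (v : Fin n → F) : upperTri F n :=
  ⟨Matrix.diagonal v, blockTriangular_diagonal v⟩

@[simp]
theorem diagonal_apply_self (v : Fin n → F) (i : Fin n) : (diagonal v).1 i i = v i :=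
  diagonal_apply_eq v i

end upperTri

def diagQuotEquiv (F : Type) [Field F] (n : ℕ) : Quotient (diagSetoid F n) ≃ (Fin n → F) where
  toFun := Quotient.lift (fun a i => a.1 i i) fun _ _ h => funext h
  invFun v := ⟦upperTri.diagonal v⟧
  left_inv := Quotient.ind fun _ => Quotient.sound fun i => upperTri.diagonal_apply_self _ i
  right_inv v := funext fun i => upperTri.diagonal_apply_self v i

variable {F : Type} [Field F] {n : ℕ}

theorem cayley_adj_iff [NeZero n] (a b : upperTri F n) :
    (cayley F n).Adj a b ↔ ∀ i, a.1 i i ≠ b.1 i i := by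
  simp only [cayley, upperTri.isUnit_iff, AddSubgroupClass.coe_sub, Matrix.sub_apply,
    sub_ne_zero]
  exact ⟨And.right, fun h => ⟨fun hab => h 0 (hab ▸ rfl), h⟩⟩

theorem antipodalHamming_adj_iff {S : Type} [NeZero n] (u v : Fin n → S) :
    (antipodalHamming S n).Adj u v ↔ ∀ i, u i ≠ v i :=
  ⟨And.right, fun h => ⟨fun huv => h 0 (congrFun huv 0), h⟩⟩

theorem diagQuot_adj_mk_iff [NeZero n] (a b : upperTri F n) :
    (diagQuot F n).Adj ⟦a⟧ ⟦b⟧ ↔ ∀ i, a.1 i i ≠ b.1 i i := by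
  refine ⟨fun ⟨x, y, hx, hy, hxy⟩ i => ?_,
    fun h => ⟨a, b, rfl, rfl, (cayley_adj_iff a b).2 h⟩⟩
  rw [← Quotient.exact hx i, ← Quotient.exact hy i]
  exact (cayley_adj_iff x y).1 hxy i

theorem stmt15_general (F : Type) [Field F] (n : ℕ) [NeZero n] :
    Nonempty (diagQuot F n ≃g antipodalHamming F n) := by
  refine ⟨⟨diagQuotEquiv F n, fun {X Y} => ?_⟩⟩
  induction X, Y using Quotient.inductionOn₂ with
  | h a b => exact (antipodalHamming_adj_iff _ _).trans (diagQuot_adj_mk_iff a b).symm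

/-- The quotient of `C_{T_n(F)}` by the equivalence "equal diagonals" is isomorphic
to the antipodal Hamming graph `A(H(n, |F|))`. -/
theorem stmt15 (F : Type) [Field F] [Fintype F] (n : ℕ) [NeZero n] :
    Nonempty (diagQuot F n ≃g antipodalHamming F n) :=
  stmt15_general F n
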